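/- arXiv:1506.07406 — 2 statements merged into one kernel-verified Lean document; each statement's English description precedes it below -/
import Mathlib

section
/- Let g(x) = G(x, e^{h(x)}) with G ∈ ℤ[X,Y], h ∈ ℤ[X], deg_X(G) ≤ d_X, deg_Y(G) ≤ d_Y, deg(h) ≤ δ. Then for every ν ∈ ℕ, the ν-th derivative g^{(ν)}(x) equals ᵛG̃(x, e^{h(x)}) for a polynomial ᵛG̃ ∈ ℤ[X,Y] with deg_X(ᵛG̃) ≤ ν(δ−1) + d_X, deg_Y(ᵛG̃) ≤ d_Y, and H(ᵛG̃) ≤ H(G)·∏_{j=0}^{ν−1} (j(δ−1) + d_X + d_Y δ² H(h)). -/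
/-- Height of an integer polynomial: max absolute value of its coefficients. -/
def heightP (h : Polynomial ℤ) : ℕ := h.support.sup fun i => (h.coeff i).natAbs

/-- Height of an integer bivariate polynomial. -/
def heightM (G : MvPolynomial (Fin 2) ℤ) : ℕ :=
  G.support.sup fun m => (MvPolynomial.coeff m G).natAbs

/-- The operation `G ↦ G̃ = ∂G/∂X + h'(X)·Y·∂G/∂Y`. -/
noncomputable def etld (h : Polynomial ℤ) (G : MvPolynomial (Fin 2) ℤ) :
    MvPolynomial (Fin 2) ℤ :=
  MvPolynomial.pderiv 0 G +
    Polynomial.aeval (MvPolynomial.X 0) (Polynomial.derivative h) *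
      MvPolynomial.X 1 * MvPolynomial.pderiv 1 G


/-! Both `d/dt` acting on `t ↦ G(t, e^{h(t)})` and `etld h` acting on `G` are derivations, and
they match on `X` and `Y` (since `(e^h)' = h' e^h`), so the derivative of the evaluation is the
evaluation of `etld h G`. For the bounds, `∂/∂X` does not raise degrees and multiplies the
coefficient of `X^a Y^b` by `a + 1 ≤ deg_X G`, while `Y ∂/∂Y` multiplies it by `b ≤ deg_Y G` and
keeps the support. Multiplying by `h'(X)`, which has at most `deg h` coefficients, each of size at
most `deg h · H(h)`, raises `deg_X` by at most `deg h - 1` and the height by a factor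
`(deg h)² H(h)`. Iterating gives the product. -/

open MvPolynomial

namespace MvPolynomial

variable {σ R : Type*} [CommSemiring R]

theorem coeff_X_mul_pderiv [DecidableEq σ] (i : σ) (p : MvPolynomial σ R) (m : σ →₀ ℕ) :
    coeff m (X i * pderiv i p) = m i * coeff m p := by
  rw [coeff_X_mul', coeff_pderiv]
  split_ifs with hi
  · have hle : Finsupp.single i 1 ≤ m := Finsupp.single_le_iff.mpr (Nat.one_le_iff_ne_zero.mpr
      (Finsupp.mem_support_iff.mp hi))
    rw [tsub_add_cancel_of_le hle, Finsupp.tsub_apply, Finsupp.single_eq_same,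
      ← Nat.cast_add_one, Nat.sub_add_cancel (Finsupp.single_le_iff.mp hle), mul_comm]
  · rw [Finsupp.notMem_support_iff.mp hi, Nat.cast_zero, zero_mul]

theorem support_X_mul_pderiv_subset (i : σ) (p : MvPolynomial σ R) :
    (X i * pderiv i p).support ⊆ p.support := by
  classical
  intro m hm
  rw [mem_support_iff, coeff_X_mul_pderiv] at hm
  exact mem_support_iff.mpr (right_ne_zero_of_mul hm)

theorem degreeOf_X_mul_pderiv_le (i j : σ) (p : MvPolynomial σ R) :
    degreeOf j (X i * pderiv i p) ≤ degreeOf j p :=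
  degreeOf_le_iff.mpr fun _ hm => monomial_le_degreeOf j (support_X_mul_pderiv_subset i p hm)

theorem degreeOf_pderiv_le (i j : σ) (p : MvPolynomial σ R) :
    degreeOf j (pderiv i p) ≤ degreeOf j p := by
  classical
  refine degreeOf_le_iff.mpr fun m hm => ?_
  rw [mem_support_iff, coeff_pderiv] at hm
  calc m j ≤ (m + Finsupp.single i 1 : σ →₀ ℕ) j := by simp
    _ ≤ degreeOf j p := monomial_le_degreeOf j (mem_support_iff.mpr (left_ne_zero_of_mul hm))

theorem aeval_X_eq_sum_monomial (j : σ) (p : Polynomial R) :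
    Polynomial.aeval (X j : MvPolynomial σ R) p =
      ∑ k ∈ p.support, monomial (Finsupp.single j k) (p.coeff k) := by
  conv_lhs => rw [p.as_sum_support]
  simp [Polynomial.aeval_monomial, X_pow_eq_monomial, algebraMap_eq, C_mul_monomial]

theorem degreeOf_aeval_X_self_le (j : σ) (p : Polynomial R) :
    degreeOf j (Polynomial.aeval (X j : MvPolynomial σ R) p) ≤ p.natDegree := by
  rw [aeval_X_eq_sum_monomial]
  refine (degreeOf_sum_le _ _ _).trans (Finset.sup_le fun k hk => ?_)
  rw [degreeOf_monomial_eq _ _ (Polynomial.mem_support_iff.mp hk), Finsupp.single_eq_same]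
  exact Polynomial.le_natDegree_of_mem_supp k hk

theorem degreeOf_aeval_X_of_ne {i j : σ} (hij : i ≠ j) (p : Polynomial R) :
    degreeOf i (Polynomial.aeval (X j : MvPolynomial σ R) p) = 0 := by
  rw [aeval_X_eq_sum_monomial, ← Nat.le_zero]
  refine (degreeOf_sum_le _ _ _).trans (Finset.sup_le fun k hk => ?_)
  rw [degreeOf_monomial_eq _ _ (Polynomial.mem_support_iff.mp hk),
    Finsupp.single_eq_of_ne hij]

theorem aeval_aeval_X {S : Type*} [CommSemiring S] [Algebra R S] (f : σ → S) (j : σ)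
    (p : Polynomial R) :
    aeval f (Polynomial.aeval (X j : MvPolynomial σ R) p) = Polynomial.aeval (f j) p := by
  rw [← Polynomial.aeval_algHom_apply, aeval_X]

end MvPolynomial

theorem natAbs_coeff_le_heightM (G : MvPolynomial (Fin 2) ℤ) (m : Fin 2 →₀ ℕ) :
    (coeff m G).natAbs ≤ heightM G := by
  by_cases hm : m ∈ G.support
  · exact Finset.le_sup (f := fun m => (coeff m G).natAbs) hm
  · simp [notMem_support_iff.mp hm]

theorem heightM_le {G : MvPolynomial (Fin 2) ℤ} {c : ℕ} (hc : ∀ m, (coeff m G).natAbs ≤ c) :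
    heightM G ≤ c :=
  Finset.sup_le fun m _ => hc m

theorem heightM_add_le (p q : MvPolynomial (Fin 2) ℤ) :
    heightM (p + q) ≤ heightM p + heightM q :=
  heightM_le fun m => by
    rw [coeff_add]
    exact (Int.natAbs_add_le _ _).trans
      (add_le_add (natAbs_coeff_le_heightM p m) (natAbs_coeff_le_heightM q m))

theorem heightM_sum_le {ι : Type*} (s : Finset ι) (f : ι → MvPolynomial (Fin 2) ℤ) :
    heightM (∑ i ∈ s, f i) ≤ ∑ i ∈ s, heightM (f i) :=
  heightM_le fun m => by
    rw [coeff_sum]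
    exact (Int.natAbs_sum_le _ _).trans
      (Finset.sum_le_sum fun i _ => natAbs_coeff_le_heightM (f i) m)

theorem heightM_monomial_mul_le (s : Fin 2 →₀ ℕ) (a : ℤ) (q : MvPolynomial (Fin 2) ℤ) :
    heightM (monomial s a * q) ≤ a.natAbs * heightM q :=
  heightM_le fun m => by
    rw [coeff_monomial_mul']
    split_ifs
    · rw [Int.natAbs_mul]
      exact Nat.mul_le_mul_left _ (natAbs_coeff_le_heightM q _)
    · simp

theorem natAbs_coeff_le_heightP (p : Polynomial ℤ) (k : ℕ) : (p.coeff k).natAbs ≤ heightP p := by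
  by_cases hk : k ∈ p.support
  · exact Finset.le_sup (f := fun i => (p.coeff i).natAbs) hk
  · simp [Polynomial.notMem_support_iff.mp hk]

theorem heightM_aeval_X_mul_le (j : Fin 2) (p : Polynomial ℤ) (q : MvPolynomial (Fin 2) ℤ) :
    heightM (Polynomial.aeval (X j) p * q) ≤ p.support.card * heightP p * heightM q := by
  rw [aeval_X_eq_sum_monomial, Finset.sum_mul]
  calc heightM (∑ k ∈ p.support, monomial (Finsupp.single j k) (p.coeff k) * q)
      ≤ ∑ k ∈ p.support, (p.coeff k).natAbs * heightM q :=
        (heightM_sum_le _ _).trans (Finset.sum_le_sum fun _ _ => heightM_monomial_mul_le _ _ _)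
    _ ≤ ∑ _k ∈ p.support, heightP p * heightM q :=
        Finset.sum_le_sum fun k _ => Nat.mul_le_mul_right _ (natAbs_coeff_le_heightP p k)
    _ = p.support.card * heightP p * heightM q := by
        rw [Finset.sum_const, smul_eq_mul, mul_assoc]

theorem heightM_pderiv_le (i : Fin 2) (G : MvPolynomial (Fin 2) ℤ) :
    heightM (pderiv i G) ≤ degreeOf i G * heightM G :=
  heightM_le fun m => by
    rw [coeff_pderiv, Int.natAbs_mul, mul_comm]
    by_cases hc : coeff (m + Finsupp.single i 1) G = 0
    · simp [hc]
    · have hdeg : m i + 1 ≤ degreeOf i G := by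
        simpa using monomial_le_degreeOf i (mem_support_iff.mpr hc)
      exact Nat.mul_le_mul (by omega) (natAbs_coeff_le_heightM G _)

theorem heightM_X_mul_pderiv_le (i : Fin 2) (G : MvPolynomial (Fin 2) ℤ) :
    heightM (X i * pderiv i G) ≤ degreeOf i G * heightM G :=
  heightM_le fun m => by
    rw [coeff_X_mul_pderiv, Int.natAbs_mul, Int.natAbs_natCast]
    by_cases hm : m ∈ G.support
    · exact Nat.mul_le_mul (monomial_le_degreeOf i hm) (natAbs_coeff_le_heightM G m)
    · simp [notMem_support_iff.mp hm]

theorem heightP_derivative_le (p : Polynomial ℤ) :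
    heightP (Polynomial.derivative p) ≤ p.natDegree * heightP p :=
  Finset.sup_le fun k _ => by
    rw [Polynomial.coeff_derivative, Int.natAbs_mul, mul_comm]
    by_cases hc : p.coeff (k + 1) = 0
    · simp [hc]
    · have hdeg : k + 1 ≤ p.natDegree := Polynomial.le_natDegree_of_ne_zero hc
      exact Nat.mul_le_mul (by omega) (natAbs_coeff_le_heightP p _)

theorem card_support_derivative_le {R : Type*} [Semiring R] (p : Polynomial R) :
    (Polynomial.derivative p).support.card ≤ p.natDegree := by
  calc (Polynomial.derivative p).support.card ≤ (Finset.range p.natDegree).card := by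
        refine Finset.card_le_card fun k hk => Finset.mem_range.mpr ?_
        rw [Polynomial.mem_support_iff, Polynomial.coeff_derivative] at hk
        exact Polynomial.le_natDegree_of_ne_zero (left_ne_zero_of_mul hk)
    _ = p.natDegree := Finset.card_range _

section etld

variable (h : Polynomial ℤ)

theorem etld_eq (G : MvPolynomial (Fin 2) ℤ) :
    etld h G = pderiv 0 G +
      Polynomial.aeval (X 0) (Polynomial.derivative h) * (X 1 * pderiv 1 G) := by
  rw [etld, mul_assoc]

theorem etld_add (p q : MvPolynomial (Fin 2) ℤ) : etld h (p + q) = etld h p + etld h q := by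
  simp only [etld, map_add]
  ring

theorem etld_mul (p q : MvPolynomial (Fin 2) ℤ) :
    etld h (p * q) = etld h p * q + p * etld h q := by
  simp only [etld, pderiv_mul]
  ring

theorem degreeOf_zero_etld_le (G : MvPolynomial (Fin 2) ℤ) :
    degreeOf 0 (etld h G) ≤ (h.natDegree - 1) + degreeOf 0 G := by
  have hderiv : degreeOf (0 : Fin 2) (Polynomial.aeval (X 0) (Polynomial.derivative h))
      ≤ h.natDegree - 1 :=
    (degreeOf_aeval_X_self_le 0 _).trans (Polynomial.natDegree_derivative_le h)
  rw [etld_eq]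
  refine (degreeOf_add_le _ _ _).trans (max_le ?_ ?_)
  · exact (degreeOf_pderiv_le 0 0 G).trans (Nat.le_add_left _ _)
  · exact (degreeOf_mul_le _ _ _).trans (add_le_add hderiv (degreeOf_X_mul_pderiv_le 1 0 G))

theorem degreeOf_one_etld_le (G : MvPolynomial (Fin 2) ℤ) :
    degreeOf 1 (etld h G) ≤ degreeOf 1 G := by
  rw [etld_eq]
  refine (degreeOf_add_le _ _ _).trans (max_le (degreeOf_pderiv_le 0 1 G) ?_)
  refine (degreeOf_mul_le _ _ _).trans ?_
  rw [degreeOf_aeval_X_of_ne (by decide), zero_add]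
  exact degreeOf_X_mul_pderiv_le 1 1 G

theorem heightM_etld_le (G : MvPolynomial (Fin 2) ℤ) :
    heightM (etld h G) ≤
      (degreeOf 0 G + degreeOf 1 G * h.natDegree ^ 2 * heightP h) * heightM G := by
  rw [etld_eq]
  calc _ ≤ degreeOf 0 G * heightM G + (Polynomial.derivative h).support.card *
          heightP (Polynomial.derivative h) * (degreeOf 1 G * heightM G) :=
        (heightM_add_le _ _).trans (add_le_add (heightM_pderiv_le 0 G)
          ((heightM_aeval_X_mul_le _ _ _).trans
            (Nat.mul_le_mul_left _ (heightM_X_mul_pderiv_le 1 G))))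
    _ ≤ degreeOf 0 G * heightM G + h.natDegree * (h.natDegree * heightP h) *
          (degreeOf 1 G * heightM G) := by
        gcongr
        · exact card_support_derivative_le h
        · exact heightP_derivative_le h
    _ = _ := by ring

end etld

theorem hasDerivAt_aeval_etld (h : Polynomial ℤ) (G : MvPolynomial (Fin 2) ℤ) (x : ℝ) :
    HasDerivAt (fun t => aeval ![t, Real.exp (Polynomial.aeval t h)] G)
      (aeval ![x, Real.exp (Polynomial.aeval x h)] (etld h G)) x := by
  induction G using MvPolynomial.induction_on with
  | C a => simpa [etld] using hasDerivAt_const x (algebraMap ℤ ℝ a)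
  | add p q hp hq =>
    simp only [etld_add, map_add]
    exact hp.add hq
  | mul_X p i hp =>
    have hX : HasDerivAt
        (fun t => aeval ![t, Real.exp (Polynomial.aeval t h)] (X i : MvPolynomial (Fin 2) ℤ))
        (aeval ![x, Real.exp (Polynomial.aeval x h)] (etld h (X i))) x := by
      fin_cases i
      · simpa [etld] using hasDerivAt_id' x
      · simpa [etld, aeval_aeval_X, mul_comm] using (Polynomial.hasDerivAt_aeval h x).exp
    simp only [etld_mul, map_add, map_mul]
    exact hp.mul hX

theorem iteratedDeriv_aeval_eq_aeval_iterate_etld (h : Polynomial ℤ) (G : MvPolynomial (Fin 2) ℤ)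
    (ν : ℕ) :
    iteratedDeriv ν (fun t => aeval ![t, Real.exp (Polynomial.aeval t h)] G) =
      fun t => aeval ![t, Real.exp (Polynomial.aeval t h)] ((etld h)^[ν] G) := by
  induction ν with
  | zero => rfl
  | succ ν ih =>
    rw [iteratedDeriv_succ, ih, Function.iterate_succ_apply']
    exact funext fun x => (hasDerivAt_aeval_etld h _ x).deriv

section iterate

variable (h : Polynomial ℤ) (G : MvPolynomial (Fin 2) ℤ)

theorem degreeOf_zero_iterate_etld_le (ν : ℕ) :
    degreeOf 0 ((etld h)^[ν] G) ≤ ν * (h.natDegree - 1) + degreeOf 0 G := by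
  induction ν with
  | zero => simp
  | succ ν ih =>
    rw [Function.iterate_succ_apply']
    refine (degreeOf_zero_etld_le h _).trans ?_
    rw [add_one_mul, add_comm (ν * _), add_assoc]
    exact Nat.add_le_add_left ih _

theorem degreeOf_one_iterate_etld_le (ν : ℕ) :
    degreeOf 1 ((etld h)^[ν] G) ≤ degreeOf 1 G := by
  induction ν with
  | zero => rfl
  | succ ν ih =>
    rw [Function.iterate_succ_apply']
    exact (degreeOf_one_etld_le h _).trans ih

theorem heightM_iterate_etld_le {dX dY δ : ℕ} (hdX : degreeOf 0 G ≤ dX)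
    (hdY : degreeOf 1 G ≤ dY) (hδ : h.natDegree ≤ δ) (ν : ℕ) :
    heightM ((etld h)^[ν] G) ≤
      heightM G * ∏ j ∈ Finset.range ν, (j * (δ - 1) + dX + dY * δ ^ 2 * heightP h) := by
  induction ν with
  | zero => simp
  | succ ν ih =>
    have hfactor : degreeOf 0 ((etld h)^[ν] G) +
        degreeOf 1 ((etld h)^[ν] G) * h.natDegree ^ 2 * heightP h ≤
          ν * (δ - 1) + dX + dY * δ ^ 2 * heightP h := by
      gcongr
      · exact (degreeOf_zero_iterate_etld_le h G ν).trans (by gcongr)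
      · exact (degreeOf_one_iterate_etld_le h G ν).trans hdY
    rw [Function.iterate_succ_apply', Finset.prod_range_succ]
    exact ((heightM_etld_le h _).trans (Nat.mul_le_mul hfactor ih)).trans_eq (by ring)

end iterate

theorem stmt_12 (G : MvPolynomial (Fin 2) ℤ) (h : Polynomial ℤ) (dX dY δ : ℕ)
    (hdX : MvPolynomial.degreeOf 0 G ≤ dX) (hdY : MvPolynomial.degreeOf 1 G ≤ dY)
    (hδ : h.natDegree ≤ δ) :
    ∀ ν : ℕ,
      (∀ x : ℝ,
        iteratedDeriv ν (fun t => MvPolynomial.aeval ![t, Real.exp (Polynomial.aeval t h)] G) x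
          = MvPolynomial.aeval ![x, Real.exp (Polynomial.aeval x h)] ((etld h)^[ν] G)) ∧
      MvPolynomial.degreeOf 0 ((etld h)^[ν] G) ≤ ν * (δ - 1) + dX ∧
      MvPolynomial.degreeOf 1 ((etld h)^[ν] G) ≤ dY ∧
      heightM ((etld h)^[ν] G) ≤ heightM G *
        ∏ j ∈ Finset.range ν, (j * (δ - 1) + dX + dY * δ ^ 2 * heightP h) := by
  intro ν
  refine ⟨congrFun (iteratedDeriv_aeval_eq_aeval_iterate_etld h G ν), ?_,
    (degreeOf_one_iterate_etld_le h G ν).trans hdY, heightM_iterate_etld_le h G hdX hdY hδ ν⟩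
  calc degreeOf 0 ((etld h)^[ν] G) ≤ ν * (h.natDegree - 1) + degreeOf 0 G :=
        degreeOf_zero_iterate_etld_le h G ν
    _ ≤ ν * (δ - 1) + dX := by gcongr
end

section
/- Let f₀ be continuous on (a, b) and (f₀, …, f_N) a Sturm sequence for f₀ on (a, b), and suppose f₀ extends continuously and is analytic on an open interval containing [a,b] with all f_i nonzero analytic. Then the number of zeros of f₀ in the open interval (a, b) equals v(f, a⁺) − v(f, b⁻), where v(f, a⁺) counts sign variations of (sg(f₀, a⁺), …, sg(f_N, a⁺)) and sg(g, c⁺) (resp. sg(g, c⁻)) is the constant sign g takes immediately to the right (resp. left) of c. -/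
/-- Number of sign variations of a tuple of reals (zeros removed). -/
noncomputable def signVar (l : List ℝ) : ℕ :=
  let l' := l.filter (fun x => decide (x ≠ 0))
  (l'.zip l'.tail).countP (fun q => decide (q.1 * q.2 < 0))

/-- Heindel's notion of a Sturm sequence for `f 0` on `(a,b)`. -/
def IsSturmSequence (a b : ℝ) (N : ℕ) (f : ℕ → ℝ → ℝ) : Prop :=
  (∀ i ≤ N, ContinuousOn (f i) (Set.Ioo a b)) ∧
  (∀ y ∈ Set.Ioo a b, f 0 y = 0 →
    ∃ ε > 0, Set.Ioo (y - ε) (y + ε) ⊆ Set.Ioo a b ∧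
      (∀ x ∈ Set.Ioo (y - ε) (y + ε), x ≠ y → f 1 x ≠ 0) ∧
      (∀ x, y - ε < x → x < y → f 0 x * f 1 x < 0) ∧
      (∀ x, y < x → x < y + ε → f 0 x * f 1 x > 0)) ∧
  (∀ i, 1 ≤ i → i + 1 ≤ N → ∀ x ∈ Set.Ioo a b, f i x = 0 →
      f (i - 1) x * f (i + 1) x < 0) ∧
  (∀ x ∈ Set.Ioo a b, f N x ≠ 0)

/-- Multiplicity of `c` as a zero of `g`: the least `r` with `g^{(r)}(c) ≠ 0`. -/
noncomputable def zmult (g : ℝ → ℝ) (c : ℝ) : ℕ :=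
  sInf {r | iteratedDeriv r g c ≠ 0}

/-- The sign `g` takes immediately to the right of `c`. -/
noncomputable def sgRight (g : ℝ → ℝ) (c : ℝ) : ℝ :=
  Real.sign (iteratedDeriv (zmult g c) g c)

/-- The sign `g` takes immediately to the left of `c`. -/
noncomputable def sgLeft (g : ℝ → ℝ) (c : ℝ) : ℝ :=
  Real.sign ((-1) ^ (zmult g c) * iteratedDeriv (zmult g c) g c)

open Filter Topology Set

/-!
Near a point `c`, a real analytic `g` that does not vanish identically is `(x - c) ^ r * h x` with
`r = zmult g c` and `h c = g⁽ʳ⁾(c) / r! ≠ 0`, so `sgRight g c` and `sgLeft g c` are the signs `g`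
takes just right and just left of `c`, and `g` has finitely many zeros on `[a, b]`. Between
consecutive zeros of the `f i` no sign changes, so `v(f, u⁺) = v(f, v⁻)`. At a point `c`, both
one-sided sign vectors have as many variations as `(sign (f i c))ᵢ`: an interior zero `f i c = 0`
sits between entries of opposite signs, so any nonzero sign filling its place contributes exactly
one variation. The exception is the first pair when `f 0 c = 0`: by condition (1), `f 0 * f 1`
goes from negative to positive, so exactly one variation is lost at each zero of `f 0`.
-/

theorem Real.sign_mul (x y : ℝ) : Real.sign (x * y) = Real.sign x * Real.sign y := by
  rcases lt_trichotomy x 0 with hx | rfl | hx <;> rcases lt_trichotomy y 0 with hy | rfl | hy <;>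
    simp [Real.sign_of_neg, Real.sign_of_pos, Real.sign_zero, mul_pos_of_neg_of_neg,
      mul_neg_of_neg_of_pos, mul_neg_of_pos_of_neg, *]

theorem Real.sign_pow (x : ℝ) (n : ℕ) : Real.sign (x ^ n) = Real.sign x ^ n := by
  induction n with
  | zero => simp [Real.sign_one]
  | succ n ih => rw [pow_succ, Real.sign_mul, ih, pow_succ]

theorem ContinuousAt.eventually_sign_eq {h : ℝ → ℝ} {c : ℝ} (hh : ContinuousAt h c)
    (hc : h c ≠ 0) : ∀ᶠ x in 𝓝 c, Real.sign (h x) = Real.sign (h c) := by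
  rcases hc.lt_or_gt with hneg | hpos
  · filter_upwards [hh.eventually (gt_mem_nhds hneg)] with x hx
    rw [Real.sign_of_neg hx, Real.sign_of_neg hneg]
  · filter_upwards [hh.eventually (lt_mem_nhds hpos)] with x hx
    rw [Real.sign_of_pos hx, Real.sign_of_pos hpos]

theorem zmult_eq_zero_of_ne_zero {g : ℝ → ℝ} {c : ℝ} (h : g c ≠ 0) : zmult g c = 0 :=
  Nat.sInf_eq_zero.mpr (Or.inl (by simpa using h))

theorem sgRight_of_ne_zero {g : ℝ → ℝ} {c : ℝ} (h : g c ≠ 0) :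
    sgRight g c = Real.sign (g c) := by
  rw [sgRight, zmult_eq_zero_of_ne_zero h, iteratedDeriv_zero]

theorem sgLeft_of_ne_zero {g : ℝ → ℝ} {c : ℝ} (h : g c ≠ 0) :
    sgLeft g c = Real.sign (g c) := by
  rw [sgLeft, zmult_eq_zero_of_ne_zero h, iteratedDeriv_zero, pow_zero, one_mul]

namespace AnalyticAt

variable {g : ℝ → ℝ} {c : ℝ}

theorem iteratedDeriv_zmult_ne_zero (hg : AnalyticAt ℝ g c) (hg0 : ¬∀ᶠ z in 𝓝 c, g z = 0) :
    iteratedDeriv (zmult g c) g c ≠ 0 := by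
  suffices ∃ k, iteratedDeriv k g c ≠ 0 from Nat.sInf_mem this
  contrapose! hg0
  refine analyticOrderAt_eq_top.mp (ENat.eq_top_iff_forall_ge.mpr fun n => ?_)
  exact (natCast_le_analyticOrderAt_iff_iteratedDeriv_eq_zero hg).mpr fun i _ => hg0 i

theorem exists_eq_pow_zmult_mul (hg : AnalyticAt ℝ g c) :
    ∃ h : ℝ → ℝ, ContinuousAt h c ∧ h c = iteratedDeriv (zmult g c) g c / (zmult g c).factorial ∧
      ∀ z, g z = (z - c) ^ zmult g c * h z := by
  set p := FormalMultilinearSeries.ofScalars ℝ fun n => iteratedDeriv n g c / n.factorial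
  have hp : HasFPowerSeriesAt g p c := hg.hasFPowerSeriesAt
  have hord : p.order = zmult g c := by
    simp [p, FormalMultilinearSeries.order, zmult, FormalMultilinearSeries.ofScalars_eq_zero,
      Nat.factorial_ne_zero]
  have hdslope := hp.has_fpower_series_iterate_dslope_fslope p.order
  refine ⟨_, hdslope.continuousAt, ?_, fun z => ?_⟩
  · rw [← hdslope.coeff_zero 1, ← FormalMultilinearSeries.coeff,
      FormalMultilinearSeries.coeff_iterate_fslope, zero_add, hord,
      FormalMultilinearSeries.coeff_ofScalars]
  · rw [hp.eq_pow_order_mul_iterate_dslope z, hord, smul_eq_mul]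

theorem eventually_sign_eq (hg : AnalyticAt ℝ g c) (hg0 : ¬∀ᶠ z in 𝓝 c, g z = 0) :
    ∀ᶠ x in 𝓝 c, Real.sign (g x) =
      Real.sign ((x - c) ^ zmult g c) * Real.sign (iteratedDeriv (zmult g c) g c) := by
  obtain ⟨h, hcont, hhc, hgh⟩ := hg.exists_eq_pow_zmult_mul
  have hD := hg.iteratedDeriv_zmult_ne_zero hg0
  have hsign : Real.sign (h c) = Real.sign (iteratedDeriv (zmult g c) g c) := by
    rw [hhc, div_eq_mul_inv, Real.sign_mul,
      Real.sign_of_pos (inv_pos.2 (Nat.cast_pos.2 (Nat.factorial_pos _))), mul_one]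
  filter_upwards [hcont.eventually_sign_eq (hhc ▸ div_ne_zero hD (by positivity))] with x hx
  rw [hgh, Real.sign_mul, hx, hsign]

theorem eventually_nhdsGT_sign_eq_sgRight (hg : AnalyticAt ℝ g c)
    (hg0 : ¬∀ᶠ z in 𝓝 c, g z = 0) : ∀ᶠ x in 𝓝[>] c, Real.sign (g x) = sgRight g c := by
  filter_upwards [nhdsWithin_le_nhds (hg.eventually_sign_eq hg0), self_mem_nhdsWithin]
    with x hx hcx
  rw [hx, Real.sign_pow, Real.sign_of_pos (sub_pos.2 hcx), one_pow, one_mul, sgRight]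

theorem eventually_nhdsLT_sign_eq_sgLeft (hg : AnalyticAt ℝ g c)
    (hg0 : ¬∀ᶠ z in 𝓝 c, g z = 0) : ∀ᶠ x in 𝓝[<] c, Real.sign (g x) = sgLeft g c := by
  filter_upwards [nhdsWithin_le_nhds (hg.eventually_sign_eq hg0), self_mem_nhdsWithin]
    with x hx hxc
  rw [hx, Real.sign_pow, Real.sign_of_neg (sub_neg.2 hxc), sgLeft, Real.sign_mul,
    Real.sign_pow, Real.sign_of_neg neg_one_lt_zero]

theorem sgRight_ne_zero (hg : AnalyticAt ℝ g c) (hg0 : ¬∀ᶠ z in 𝓝 c, g z = 0) :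
    sgRight g c ≠ 0 :=
  Real.sign_eq_zero_iff.not.mpr (hg.iteratedDeriv_zmult_ne_zero hg0)

theorem sgLeft_ne_zero (hg : AnalyticAt ℝ g c) (hg0 : ¬∀ᶠ z in 𝓝 c, g z = 0) :
    sgLeft g c ≠ 0 :=
  Real.sign_eq_zero_iff.not.mpr (mul_ne_zero (by simp) (hg.iteratedDeriv_zmult_ne_zero hg0))

end AnalyticAt

theorem List.ofFn_val_succ {α : Type*} (u : ℕ → α) (n : ℕ) :
    (List.ofFn fun i : Fin (n + 1) => u i) = u 0 :: List.ofFn fun i : Fin n => u (i + 1) := by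
  simp [List.ofFn_succ]

theorem signVar_cons_zero (l : List ℝ) : signVar (0 :: l) = signVar l := by
  simp [signVar]

theorem signVar_cons_cons_zero (x : ℝ) (l : List ℝ) :
    signVar (x :: 0 :: l) = signVar (x :: l) := by
  simp [signVar, List.filter_cons]

theorem signVar_cons_cons {x y : ℝ} (hx : x ≠ 0) (hy : y ≠ 0) (l : List ℝ) :
    signVar (x :: y :: l) = (if x * y < 0 then 1 else 0) + signVar (y :: l) := by
  simp only [signVar, List.filter_cons, hx, hy, ne_eq, not_false_eq_true, decide_true,
    if_true, List.tail_cons, List.zip_cons_cons, List.countP_cons]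
  split_ifs <;> simp_all [Nat.add_comm]

theorem signVar_cons_cons_cons {x y z : ℝ} (hxz : x * z < 0) (hy : y ≠ 0) (l : List ℝ) :
    signVar (x :: y :: z :: l) = signVar (x :: z :: l) := by
  have hx : x ≠ 0 := by rintro rfl; simp at hxz
  have hz : z ≠ 0 := by rintro rfl; simp at hxz
  rw [signVar_cons_cons hx hy, signVar_cons_cons hy hz, signVar_cons_cons hx hz, if_pos hxz]
  have hyy : 0 < y * y := mul_self_pos.mpr hy
  by_cases hxy : x * y < 0 <;> by_cases hyz : y * z < 0 <;> simp only [hxy, hyz, if_true, if_false]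
  · nlinarith [mul_pos_of_neg_of_neg hxy hyz]
  · omega
  · omega
  · nlinarith [mul_nonneg (not_lt.mp hxy) (not_lt.mp hyz)]

theorem signVar_ofFn_eq_of_alternating_zeros {n : ℕ} {u w : ℕ → ℝ}
    (hw : ∀ i ≤ n, w i ≠ 0) (hwu : ∀ i ≤ n, u i ≠ 0 → w i = u i)
    (halt : ∀ i, i + 2 ≤ n → u (i + 1) = 0 → u i * u (i + 2) < 0)
    (h0 : u 0 ≠ 0) (hn : u n ≠ 0) :
    signVar (List.ofFn fun i : Fin (n + 1) => w i) =
      signVar (List.ofFn fun i : Fin (n + 1) => u i) := by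
  induction n using Nat.strong_induction_on generalizing u w with
  | _ n ih =>
  rw [List.ofFn_val_succ w, List.ofFn_val_succ u, hwu 0 (Nat.zero_le _) h0]
  rcases n with _ | m
  · rfl
  rw [List.ofFn_val_succ (fun k => w (k + 1)), List.ofFn_val_succ (fun k => u (k + 1))]
  by_cases hu1 : u 1 = 0
  · obtain ⟨k, rfl⟩ : ∃ k, m = k + 1 :=
      Nat.exists_eq_add_one_of_ne_zero (by rintro rfl; exact hn hu1)
    have h02 : u 0 * u 2 < 0 := halt 0 (by omega) hu1
    have hu2 : u 2 ≠ 0 := by rintro h; simp [h] at h02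
    have IH := ih k (by omega) (u := fun j => u (j + 1 + 1)) (w := fun j => w (j + 1 + 1))
      (fun i hi => hw _ (by omega)) (fun i hi => hwu _ (by omega))
      (fun i hi => halt (i + 2) (by omega)) hu2 hn
    rw [List.ofFn_val_succ (fun j => w (j + 1 + 1)),
      List.ofFn_val_succ (fun j => u (j + 1 + 1))] at IH ⊢
    simp only [zero_add, Nat.reduceAdd] at IH
    rw [hu1, signVar_cons_cons_zero,
      signVar_cons_cons_cons (by rwa [hwu 2 (by omega) hu2]) (hw 1 (by omega)),
      signVar_cons_cons h0 (hw 2 (by omega)), signVar_cons_cons h0 hu2, IH, hwu 2 (by omega) hu2]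
  · have IH := ih m (by omega) (u := fun j => u (j + 1)) (w := fun j => w (j + 1))
      (fun i hi => hw _ (by omega)) (fun i hi => hwu _ (by omega))
      (fun i hi => halt (i + 1) (by omega)) hu1 hn
    rw [List.ofFn_val_succ (fun j => w (j + 1)), List.ofFn_val_succ (fun j => u (j + 1))] at IH
    rw [signVar_cons_cons h0 (hw 1 (by omega)), signVar_cons_cons h0 hu1, IH,
      hwu 1 (by omega) hu1]

theorem signVar_ofFn_eq_add_of_alternating_zeros {n : ℕ} {u w : ℕ → ℝ}
    (hw : ∀ i ≤ n, w i ≠ 0) (hwu : ∀ i ≤ n, u i ≠ 0 → w i = u i)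
    (halt : ∀ i, i + 2 ≤ n → u (i + 1) = 0 → u i * u (i + 2) < 0)
    (h01 : u 0 = 0 → u 1 ≠ 0) (hn : u n ≠ 0) :
    signVar (List.ofFn fun i : Fin (n + 1) => w i) =
      signVar (List.ofFn fun i : Fin (n + 1) => u i) +
        if u 0 = 0 ∧ w 0 * w 1 < 0 then 1 else 0 := by
  by_cases h0 : u 0 = 0
  · obtain ⟨m, rfl⟩ : ∃ m, n = m + 1 :=
      Nat.exists_eq_add_one_of_ne_zero (by rintro rfl; exact hn h0)
    have htail := signVar_ofFn_eq_of_alternating_zeros (u := fun j => u (j + 1))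
      (w := fun j => w (j + 1)) (fun i hi => hw _ (by omega)) (fun i hi => hwu _ (by omega))
      (fun i hi => halt (i + 1) (by omega)) (h01 h0) hn
    rw [List.ofFn_val_succ w, List.ofFn_val_succ u, h0, signVar_cons_zero, ← htail,
      List.ofFn_val_succ (fun j => w (j + 1)),
      signVar_cons_cons (hw 0 (by omega)) (hw 1 (by omega)), add_comm]
    simp only [true_and]
  · rw [signVar_ofFn_eq_of_alternating_zeros hw hwu halt h0 hn, if_neg (fun h => h0 h.1), add_zero]

theorem IsPreconnected.sign_eq_of_ne_zero {s : Set ℝ} {g : ℝ → ℝ} (hs : IsPreconnected s)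
    (hg : ContinuousOn g s) (hne : ∀ x ∈ s, g x ≠ 0) {x y : ℝ} (hx : x ∈ s) (hy : y ∈ s) :
    Real.sign (g x) = Real.sign (g y) := by
  have hzero : 0 ∉ g '' s := fun ⟨z, hz, hgz⟩ => hne z hz hgz
  rcases (hne x hx).lt_or_gt with hgx | hgx <;> rcases (hne y hy).lt_or_gt with hgy | hgy
  · rw [Real.sign_of_neg hgx, Real.sign_of_neg hgy]
  · exact absurd (hs.intermediate_value hx hy hg ⟨hgx.le, hgy.le⟩) hzero
  · exact absurd (hs.intermediate_value hy hx hg ⟨hgy.le, hgx.le⟩) hzero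
  · rw [Real.sign_of_pos hgx, Real.sign_of_pos hgy]

theorem sgRight_eq_sgLeft_of_forall_ne_zero {g : ℝ → ℝ} {u v : ℝ} (huv : u < v)
    (hu : AnalyticAt ℝ g u) (hu0 : ¬∀ᶠ z in 𝓝 u, g z = 0)
    (hv : AnalyticAt ℝ g v) (hv0 : ¬∀ᶠ z in 𝓝 v, g z = 0)
    (hcont : ContinuousOn g (Ioo u v)) (hne : ∀ x ∈ Ioo u v, g x ≠ 0) :
    sgRight g u = sgLeft g v := by
  obtain ⟨x, hxu, hx⟩ :=
    ((hu.eventually_nhdsGT_sign_eq_sgRight hu0).and (Ioo_mem_nhdsGT huv)).exists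
  obtain ⟨y, hyv, hy⟩ :=
    ((hv.eventually_nhdsLT_sign_eq_sgLeft hv0).and (Ioo_mem_nhdsLT huv)).exists
  rw [← hxu, ← hyv]
  exact isPreconnected_Ioo.sign_eq_of_ne_zero hcont hne hx hy

theorem sgRight_mul_sgRight_pos {g h : ℝ → ℝ} {c : ℝ}
    (hg : AnalyticAt ℝ g c) (hg0 : ¬∀ᶠ z in 𝓝 c, g z = 0)
    (hh : AnalyticAt ℝ h c) (hh0 : ¬∀ᶠ z in 𝓝 c, h z = 0)
    (hgh : ∀ᶠ x in 𝓝[>] c, 0 < g x * h x) : 0 < sgRight g c * sgRight h c := by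
  obtain ⟨x, ⟨hgx, hhx⟩, hx⟩ := (((hg.eventually_nhdsGT_sign_eq_sgRight hg0).and
    (hh.eventually_nhdsGT_sign_eq_sgRight hh0)).and hgh).exists
  rw [← hgx, ← hhx, ← Real.sign_mul, Real.sign_of_pos hx]
  exact one_pos

theorem sgLeft_mul_sgLeft_neg {g h : ℝ → ℝ} {c : ℝ}
    (hg : AnalyticAt ℝ g c) (hg0 : ¬∀ᶠ z in 𝓝 c, g z = 0)
    (hh : AnalyticAt ℝ h c) (hh0 : ¬∀ᶠ z in 𝓝 c, h z = 0)
    (hgh : ∀ᶠ x in 𝓝[<] c, g x * h x < 0) : sgLeft g c * sgLeft h c < 0 := by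
  obtain ⟨x, ⟨hgx, hhx⟩, hx⟩ := (((hg.eventually_nhdsLT_sign_eq_sgLeft hg0).and
    (hh.eventually_nhdsLT_sign_eq_sgLeft hh0)).and hgh).exists
  rw [← hgx, ← hhx, ← Real.sign_mul, Real.sign_of_neg hx]
  exact neg_one_lt_zero

namespace AnalyticOnNhd

variable {𝕜 E : Type*} [NontriviallyNormedField 𝕜] [NormedAddCommGroup E] [NormedSpace 𝕜 E]
  {g : 𝕜 → E} {U : Set 𝕜}

theorem not_eventually_eq_zero (hg : AnalyticOnNhd 𝕜 g U) (hU : IsPreconnected U)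
    (hne : ∃ x ∈ U, g x ≠ 0) {c : 𝕜} (hc : c ∈ U) : ¬∀ᶠ z in 𝓝 c, g z = 0 := fun h =>
  let ⟨_, hx, hgx⟩ := hne
  hgx (hg.eqOn_zero_of_preconnected_of_eventuallyEq_zero hU hc h hx)

theorem finite_zeros_of_isCompact (hg : AnalyticOnNhd 𝕜 g U) (hU : IsPreconnected U)
    (hne : ∃ x ∈ U, g x ≠ 0) {K : Set 𝕜} (hK : IsCompact K) (hKU : K ⊆ U) :
    {x ∈ K | g x = 0}.Finite := by
  rcases hg.eqOn_zero_or_eventually_ne_zero_of_preconnected hU with h | h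
  · obtain ⟨x, hx, hgx⟩ := hne
    exact absurd (h hx) hgx
  · convert hK.finite_sdiff_of_mem_codiscreteWithin (codiscreteWithin_mono hKU h) using 1
    ext
    simp

end AnalyticOnNhd

theorem eq_ncard_add_of_jumps {a b : ℝ} (hab : a < b) {Z : Set ℝ} (hZ : Z.Finite)
    {P : ℝ → Prop} [DecidablePred P] (hPZ : ∀ x ∈ Ioo a b, P x → x ∈ Z) (R L : ℝ → ℕ)
    (hconst : ∀ u v, a ≤ u → u < v → v ≤ b → (∀ x ∈ Ioo u v, x ∉ Z) → R u = L v)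
    (hjump : ∀ c ∈ Ioo a b, L c = R c + if P c then 1 else 0) :
    R a = {x ∈ Ioo a b | P x}.ncard + L b := by
  suffices H : ∀ s : Finset ℝ, ∀ v, a < v → v ≤ b → (∀ x, x ∈ s ↔ x ∈ Z ∧ x ∈ Ioo a v) →
      R a = (s.filter P).card + L v by
    rw [H _ b hab le_rfl fun x => (hZ.inter_of_left (Ioo a b)).mem_toFinset, ← ncard_coe_finset]
    congr 2
    ext x
    simp only [Finset.coe_filter, Finite.mem_toFinset, mem_inter_iff, mem_ofPred_eq]
    exact ⟨fun ⟨⟨_, hx⟩, hPx⟩ => ⟨hx, hPx⟩, fun ⟨hx, hPx⟩ => ⟨⟨hPZ x hx hPx, hx⟩, hPx⟩⟩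
  intro s
  induction s using Finset.induction_on_max with
  | empty =>
    intro v hav hvb hs
    rw [hconst a v le_rfl hav hvb fun x hx hxZ => by simpa using (hs x).2 ⟨hxZ, hx⟩]
    simp
  | insert c s hlt ih =>
    intro v hav hvb hs
    obtain ⟨hcZ, hac, hcv⟩ := (hs c).1 (Finset.mem_insert_self c s)
    have hleft : R a = (s.filter P).card + L c := by
      refine ih c hac (hcv.le.trans hvb) fun x => ⟨fun hx => ?_, fun ⟨hxZ, hax, hxc⟩ => ?_⟩
      · obtain ⟨hxZ, hax, -⟩ := (hs x).1 (Finset.mem_insert_of_mem hx)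
        exact ⟨hxZ, hax, hlt x hx⟩
      · have := (hs x).2 ⟨hxZ, hax, hxc.trans hcv⟩
        exact (Finset.mem_insert.1 this).resolve_left hxc.ne
    have hright : R c = L v := by
      refine hconst c v hac.le hcv hvb fun x ⟨hcx, hxv⟩ hxZ => ?_
      rcases Finset.mem_insert.1 ((hs x).2 ⟨hxZ, hac.trans hcx, hxv⟩) with rfl | hx
      · exact lt_irrefl x hcx
      · exact lt_asymm hcx (hlt x hx)
    have hcs : c ∉ s.filter P := fun h => lt_irrefl c (hlt c (Finset.mem_filter.1 h).1)
    rw [hleft, hjump c ⟨hac, hcv.trans_le hvb⟩, hright, Finset.filter_insert]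
    split_ifs
    · rw [Finset.card_insert_of_notMem hcs]; omega
    · omega

noncomputable def varRight (N : ℕ) (f : ℕ → ℝ → ℝ) (c : ℝ) : ℕ :=
  signVar (List.ofFn fun i : Fin (N + 1) => sgRight (f i) c)

noncomputable def varLeft (N : ℕ) (f : ℕ → ℝ → ℝ) (c : ℝ) : ℕ :=
  signVar (List.ofFn fun i : Fin (N + 1) => sgLeft (f i) c)

theorem varRight_eq_varLeft_of_forall_ne_zero {N : ℕ} {f : ℕ → ℝ → ℝ} {u v : ℝ} (huv : u < v)
    (hu : ∀ i ≤ N, AnalyticAt ℝ (f i) u ∧ ¬∀ᶠ z in 𝓝 u, f i z = 0)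
    (hv : ∀ i ≤ N, AnalyticAt ℝ (f i) v ∧ ¬∀ᶠ z in 𝓝 v, f i z = 0)
    (hcont : ∀ i ≤ N, ContinuousOn (f i) (Ioo u v))
    (hne : ∀ x ∈ Ioo u v, ∀ i ≤ N, f i x ≠ 0) :
    varRight N f u = varLeft N f v := by
  unfold varRight varLeft
  congr 2
  funext i
  exact sgRight_eq_sgLeft_of_forall_ne_zero huv (hu i i.is_le).1 (hu i i.is_le).2
    (hv i i.is_le).1 (hv i i.is_le).2 (hcont i i.is_le) fun x hx => hne x hx i i.is_le

theorem IsSturmSequence.varLeft_eq_varRight_add {a b : ℝ} {N : ℕ} {f : ℕ → ℝ → ℝ}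
    (hS : IsSturmSequence a b N f) {c : ℝ} (hc : c ∈ Ioo a b)
    (hf : ∀ i ≤ N, AnalyticAt ℝ (f i) c ∧ ¬∀ᶠ z in 𝓝 c, f i z = 0) :
    varLeft N f c = varRight N f c + if f 0 c = 0 then 1 else 0 := by
  obtain ⟨-, hcross, hinner, hN⟩ := hS
  set u : ℕ → ℝ := fun i => Real.sign (f i c)
  have hu : ∀ i, u i = 0 ↔ f i c = 0 := fun i => Real.sign_eq_zero_iff
  have halt : ∀ i, i + 2 ≤ N → u (i + 1) = 0 → u i * u (i + 2) < 0 := fun i hi h0 => by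
    have : f i c * f (i + 2) c < 0 := hinner (i + 1) (by omega) (by omega) c hc ((hu _).1 h0)
    simp only [u, ← Real.sign_mul, Real.sign_of_neg this, neg_one_lt_zero]
  have hN' : u N ≠ 0 := (hu N).not.2 (hN c hc)
  have h01 : u 0 = 0 → u 1 ≠ 0 := fun h0 h1 => by
    rcases Nat.lt_or_ge N 2 with hN2 | hN2
    · interval_cases N
      exacts [hN' h0, hN' h1]
    · simpa [(hu 0).1 h0] using hinner 1 le_rfl hN2 c hc ((hu 1).1 h1)
  have hL := signVar_ofFn_eq_add_of_alternating_zeros (w := fun i => sgLeft (f i) c)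
    (fun i hi => (hf i hi).1.sgLeft_ne_zero (hf i hi).2)
    (fun i _ hui => sgLeft_of_ne_zero ((hu i).not.1 hui)) halt h01 hN'
  have hR := signVar_ofFn_eq_add_of_alternating_zeros (w := fun i => sgRight (f i) c)
    (fun i hi => (hf i hi).1.sgRight_ne_zero (hf i hi).2)
    (fun i _ hui => sgRight_of_ne_zero ((hu i).not.1 hui)) halt h01 hN'
  rw [varLeft, varRight, hL, hR]
  by_cases h0 : f 0 c = 0
  · have hN1 : 1 ≤ N := Nat.one_le_iff_ne_zero.2 (by rintro rfl; exact hN' ((hu 0).2 h0))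
    obtain ⟨ε, hε, -, -, hneg, hpos⟩ := hcross c hc h0
    have hleft : ∀ᶠ x in 𝓝[<] c, f 0 x * f 1 x < 0 := by
      filter_upwards [Ioo_mem_nhdsLT (by linarith : c - ε < c)] with x hx using hneg x hx.1 hx.2
    have hright : ∀ᶠ x in 𝓝[>] c, 0 < f 0 x * f 1 x := by
      filter_upwards [Ioo_mem_nhdsGT (by linarith : c < c + ε)] with x hx using hpos x hx.1 hx.2
    have hL01 := sgLeft_mul_sgLeft_neg (hf 0 (Nat.zero_le N)).1 (hf 0 (Nat.zero_le N)).2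
      (hf 1 hN1).1 (hf 1 hN1).2 hleft
    have hR01 := sgRight_mul_sgRight_pos (hf 0 (Nat.zero_le N)).1 (hf 0 (Nat.zero_le N)).2
      (hf 1 hN1).1 (hf 1 hN1).2 hright
    simp [h0, hL01, not_lt.2 hR01.le]
  · simp [h0]

theorem stmt_18 (a b a' b' : ℝ) (hab : a < b) (ha' : a' < a) (hb' : b < b')
    (N : ℕ) (f : ℕ → ℝ → ℝ)
    (han : ∀ i ≤ N, AnalyticOnNhd ℝ (f i) (Set.Ioo a' b'))
    (hnz : ∀ i ≤ N, ∃ x ∈ Set.Ioo a' b', f i x ≠ 0)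
    (hS : IsSturmSequence a b N f) :
    {x ∈ Set.Ioo a b | f 0 x = 0}.ncard =
      signVar (List.ofFn fun i : Fin (N + 1) => sgRight (f i) a) -
        signVar (List.ofFn fun i : Fin (N + 1) => sgLeft (f i) b) := by
  have hU : Icc a b ⊆ Ioo a' b' := Icc_subset_Ioo ha' hb'
  have hf : ∀ c ∈ Icc a b, ∀ i ≤ N, AnalyticAt ℝ (f i) c ∧ ¬∀ᶠ z in 𝓝 c, f i z = 0 :=
    fun c hc i hi => ⟨han i hi c (hU hc),
      (han i hi).not_eventually_eq_zero isPreconnected_Ioo (hnz i hi) (hU hc)⟩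
  have hZ : {x ∈ Icc a b | ∃ i ≤ N, f i x = 0}.Finite := by
    refine ((finite_le_nat N).biUnion fun i hi => (han i hi).finite_zeros_of_isCompact
      isPreconnected_Ioo (hnz i hi) isCompact_Icc hU).subset ?_
    rintro x ⟨hx, i, hi, hfx⟩
    exact mem_biUnion hi ⟨hx, hfx⟩
  have key := eq_ncard_add_of_jumps hab hZ (P := fun x => f 0 x = 0)
    (fun x hx h0 => ⟨Ioo_subset_Icc_self hx, 0, Nat.zero_le N, h0⟩) (varRight N f) (varLeft N f)
    (fun u v hau huv hvb hne => varRight_eq_varLeft_of_forall_ne_zero huv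
      (hf u ⟨hau, huv.le.trans hvb⟩) (hf v ⟨hau.trans huv.le, hvb⟩)
      (fun i hi => (hS.1 i hi).mono (Ioo_subset_Ioo hau hvb))
      fun x hx i hi h0 => hne x hx ⟨⟨hau.trans hx.1.le, hx.2.le.trans hvb⟩, i, hi, h0⟩)
    (fun c hc => hS.varLeft_eq_varRight_add hc (hf c (Ioo_subset_Icc_self hc)))
  unfold varRight varLeft at key
  omega
end
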